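/- (Lovász form of Kruskal–Katona) Let G be a (d+1)-uniform family of subsets of [n] and let α ≥ d+1 be the real number with |G| = C(α, d+1) (generalized binomial coefficient). Then |∂_d G| ≥ C(α, d) = |G| · (d+1)/(α − d). -/

import Mathlib

/-!
By Kruskal–Katona it suffices to bound the shadow of an initial segment `𝒞` of colex. Such a
family is shifted towards `0`: replacing an element of a member by `0` stays inside `𝒞`. Split
`𝒞` into its link `𝒞₀ = {A \ {0} | 0 ∈ A ∈ 𝒞}` and the rest `𝒞₁`. Shiftedness gives
`∂𝒞₁ ⊆ 𝒞₀`, so if `|𝒞| ≥ C(x, r)`, induction on `|𝒞|` applied to `𝒞₁` and Pascal's rule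
`C(x, r) = C(x - 1, r - 1) + C(x - 1, r)` force `|𝒞₀| ≥ C(x - 1, r - 1)`. Induction on `r` then
gives `|∂𝒞| ≥ |𝒞₀| + |∂𝒞₀| ≥ C(x - 1, r - 1) + C(x - 1, r - 2) = C(x, r - 1)`.
-/

open Finset
open scoped FinsetFamily

/-- generalized binomial coefficient C(α, k) for real α -/
noncomputable def gchoose (α : ℝ) (k : ℕ) : ℝ :=
  (∏ i ∈ Finset.range k, (α - i)) / k.factorial

section gchoose

lemma gchoose_eq_ringChoose (x : ℝ) (k : ℕ) : gchoose x k = Ring.choose x k := by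
  rw [Ring.choose_eq_smul, gchoose, ← Polynomial.aeval_eq_smeval, Polynomial.aeval_def,
    ← Polynomial.eval_map, descPochhammer_map, descPochhammer_eval_eq_prod_range, smul_eq_mul,
    div_eq_inv_mul]

lemma gchoose_zero_right (x : ℝ) : gchoose x 0 = 1 := by
  simp [gchoose]

lemma gchoose_natCast (m k : ℕ) : gchoose m k = m.choose k := by
  rw [gchoose_eq_ringChoose, Ring.choose_natCast]

lemma gchoose_natCast_self (k : ℕ) : gchoose k k = 1 := by
  simp [gchoose_natCast]

lemma gchoose_succ_succ (x : ℝ) (k : ℕ) :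
    gchoose x (k + 1) = gchoose (x - 1) k + gchoose (x - 1) (k + 1) := by
  simp only [gchoose_eq_ringChoose, ← Ring.choose_succ_succ, sub_add_cancel]

lemma gchoose_succ_right (x : ℝ) (k : ℕ) :
    gchoose x (k + 1) = gchoose x k * (x - k) / (k + 1) := by
  simp only [gchoose, prod_range_succ, Nat.factorial_succ, Nat.cast_mul]
  push_cast
  field_simp

lemma sub_natCast_nonneg_of_mem_range {x : ℝ} {k i : ℕ} (hx : (k : ℝ) - 1 ≤ x)
    (hi : i ∈ range k) : 0 ≤ x - i := by
  have : (i : ℝ) + 1 ≤ k := by exact_mod_cast mem_range.1 hi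
  linarith

lemma gchoose_nonneg {x : ℝ} {k : ℕ} (hx : (k : ℝ) - 1 ≤ x) : 0 ≤ gchoose x k :=
  div_nonneg (prod_nonneg fun _ hi ↦ sub_natCast_nonneg_of_mem_range hx hi) (by positivity)

lemma gchoose_le_gchoose {x y : ℝ} {k : ℕ} (hx : (k : ℝ) - 1 ≤ x) (hxy : x ≤ y) :
    gchoose x k ≤ gchoose y k :=
  div_le_div_of_nonneg_right
    (prod_le_prod (fun _ hi ↦ sub_natCast_nonneg_of_mem_range hx hi) fun _ _ ↦ by linarith)
    (by positivity)

lemma one_le_gchoose {x : ℝ} {k : ℕ} (hx : (k : ℝ) ≤ x) : 1 ≤ gchoose x k :=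
  gchoose_natCast_self k ▸ gchoose_le_gchoose (by linarith) hx

lemma exists_gchoose_le_of_lt {y : ℝ} {k m : ℕ} (hy : (k : ℝ) ≤ y)
    (h : gchoose y (k + 1) < m) :
    ∃ z, (k : ℝ) + 1 ≤ z ∧ gchoose z (k + 1) ≤ m ∧ gchoose y k ≤ gchoose z k := by
  rcases le_total y (k + 1) with hyk | hky
  · refine ⟨k + 1, le_rfl, ?_, gchoose_le_gchoose (by linarith) hyk⟩
    have hm : (0 : ℝ) < m := (gchoose_nonneg (by push_cast; linarith)).trans_lt h
    rw [← Nat.cast_succ, gchoose_natCast_self, Nat.one_le_cast]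
    exact_mod_cast hm
  · exact ⟨y, hky, h.le, le_rfl⟩

lemma nonempty_of_gchoose_le {ι : Type*} {s : Finset ι} {x : ℝ} {k : ℕ} (hx : (k : ℝ) ≤ x)
    (h : gchoose x k ≤ #s) : s.Nonempty := by
  rw [← card_pos, ← Nat.cast_pos (α := ℝ)]
  exact zero_lt_one.trans_le ((one_le_gchoose hx).trans h)

end gchoose

section SetFamily

variable {α : Type*} [DecidableEq α] {𝒜 : Finset (Finset α)} {a : α} {r : ℕ}

lemma Set.Sized.memberSubfamily (h𝒜 : (𝒜 : Set (Finset α)).Sized (r + 1)) :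
    (𝒜.memberSubfamily a : Set (Finset α)).Sized r := by
  intro s hs
  rw [mem_coe, mem_memberSubfamily] at hs
  simpa [card_insert_of_notMem hs.2] using h𝒜 hs.1

lemma Set.Sized.nonMemberSubfamily (h𝒜 : (𝒜 : Set (Finset α)).Sized r) :
    (𝒜.nonMemberSubfamily a : Set (Finset α)).Sized r :=
  h𝒜.mono (Finset.coe_subset.2 (filter_subset _ _))

lemma memberSubfamily_subset_nonMemberSubfamily_shadow (a : α) (𝒜 : Finset (Finset α)) :
    𝒜.memberSubfamily a ⊆ (∂ 𝒜).nonMemberSubfamily a := by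
  intro s hs
  rw [mem_memberSubfamily] at hs
  rw [mem_nonMemberSubfamily]
  refine ⟨?_, hs.2⟩
  simpa [erase_insert hs.2] using erase_mem_shadow hs.1 (mem_insert_self a s)

lemma shadow_memberSubfamily_subset (a : α) (𝒜 : Finset (Finset α)) :
    ∂ (𝒜.memberSubfamily a) ⊆ (∂ 𝒜).memberSubfamily a := by
  intro t ht
  obtain ⟨s, hs, b, hb, rfl⟩ := mem_shadow_iff.1 ht
  rw [mem_memberSubfamily] at hs ⊢
  have hab : a ≠ b := (ne_of_mem_of_not_mem hb hs.2).symm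
  refine ⟨?_, fun h ↦ hs.2 (mem_of_mem_erase h)⟩
  rw [← erase_insert_of_ne hab]
  exact erase_mem_shadow hs.1 (mem_insert_of_mem hb)

lemma card_memberSubfamily_add_card_shadow_le (a : α) (𝒜 : Finset (Finset α)) :
    #(𝒜.memberSubfamily a) + #(∂ (𝒜.memberSubfamily a)) ≤ #(∂ 𝒜) := by
  rw [← card_memberSubfamily_add_card_nonMemberSubfamily a (∂ 𝒜), add_comm]
  exact add_le_add (card_le_card (shadow_memberSubfamily_subset a 𝒜))
    (card_le_card (memberSubfamily_subset_nonMemberSubfamily_shadow a 𝒜))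

lemma Set.Sized.shadow_nonempty (h𝒜 : (𝒜 : Set (Finset α)).Sized (r + 1)) (h𝒜₀ : 𝒜.Nonempty) :
    (∂ 𝒜).Nonempty := by
  obtain ⟨s, hs⟩ := h𝒜₀
  obtain ⟨b, hb⟩ : s.Nonempty := by
    rw [← card_pos, h𝒜 hs]
    exact r.succ_pos
  exact ⟨_, erase_mem_shadow hs hb⟩

lemma Set.Sized.shadow_eq_filter [Fintype α] (h𝒜 : (𝒜 : Set (Finset α)).Sized (r + 1)) :
    ∂ 𝒜 = {t ∈ Finset.powersetCard r (Finset.univ : Finset α) | ∃ s ∈ 𝒜, t ⊆ s} := by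
  ext t
  simp only [mem_shadow_iff_exists_mem_card_add_one, mem_filter, mem_powersetCard_univ]
  constructor
  · rintro ⟨s, hs, hts, hcard⟩
    exact ⟨by have := h𝒜 hs; omega, s, hs, hts⟩
  · rintro ⟨rfl, s, hs, hts⟩
    exact ⟨s, hs, hts, h𝒜 hs⟩

end SetFamily

namespace Finset.Colex

variable {α : Type*} [LinearOrder α] {𝒞 : Finset (Finset α)} {s : Finset α} {a b : α} {r : ℕ}

lemma exists_isInitSeg_card_eq [Fintype α] {N : ℕ} (hN : N ≤ (Fintype.card α).choose r) :
    ∃ 𝒞 : Finset (Finset α), IsInitSeg 𝒞 r ∧ #𝒞 = N := by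
  induction N with
  | zero => exact ⟨∅, isInitSeg_empty, card_empty⟩
  | succ N ih =>
    obtain ⟨𝒞, h𝒞, rfl⟩ := ih (by omega)
    have hne : (powersetCard r univ \ 𝒞).Nonempty := by
      rw [← card_pos, card_sdiff_of_subset (h𝒞.1.subset_powersetCard_univ), card_powersetCard,
        card_univ]
      omega
    obtain ⟨m, hm, hmin⟩ := exists_min_image _ toColex hne
    rw [mem_sdiff, mem_powersetCard_univ] at hm
    refine ⟨insert m 𝒞, ⟨?_, fun s t hs ht ↦ ?_⟩, card_insert_of_notMem hm.2⟩
    · rw [coe_insert, Set.insert_eq, Set.sized_union, Set.sized_singleton]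
      exact ⟨hm.1, h𝒞.1⟩
    rw [mem_insert] at hs ⊢
    rcases hs with rfl | hs
    · by_contra! h
      exact (hmin t (mem_sdiff.2 ⟨mem_powersetCard_univ.2 ht.2, h.2⟩)).not_gt ht.1
    · exact Or.inr (h𝒞.2 hs ht)

lemma IsInitSeg.insert_erase_mem (h𝒞 : IsInitSeg 𝒞 r) (hs : s ∈ 𝒞) (ha : a ∉ s) (hb : b ∈ s)
    (hab : a < b) : insert a (s.erase b) ∈ 𝒞 := by
  have ha' : a ∉ s.erase b := fun h ↦ ha (mem_of_mem_erase h)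
  refine h𝒞.2 hs ⟨?_, ?_⟩
  · conv_rhs => rw [← insert_erase hb]
    exact (insert_lt_insert ha' (notMem_erase b s)).2 hab
  · rw [card_insert_of_notMem ha', card_erase_add_one hb, h𝒞.1 hs]

lemma IsInitSeg.shadow_nonMemberSubfamily_subset (h𝒞 : IsInitSeg 𝒞 r) (ha : IsBot a) :
    ∂ (𝒞.nonMemberSubfamily a) ⊆ 𝒞.memberSubfamily a := by
  intro t ht
  obtain ⟨s, hs, b, hb, rfl⟩ := mem_shadow_iff.1 ht
  rw [mem_nonMemberSubfamily] at hs
  have hab : a < b := (ha b).lt_of_ne (ne_of_mem_of_not_mem hb hs.2).symm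
  exact mem_memberSubfamily.2
    ⟨h𝒞.insert_erase_mem hs.1 hs.2 hb hab, fun h ↦ hs.2 (mem_of_mem_erase h)⟩

lemma IsInitSeg.card_nonMemberSubfamily_lt (h𝒞 : IsInitSeg 𝒞 (r + 1)) (ha : IsBot a)
    (h𝒞₁ : (𝒞.nonMemberSubfamily a).Nonempty) : #(𝒞.nonMemberSubfamily a) < #𝒞 := by
  have h𝒞₀ := ((h𝒞.1.nonMemberSubfamily.shadow_nonempty h𝒞₁).mono
    (h𝒞.shadow_nonMemberSubfamily_subset ha)).card_pos
  rw [← card_memberSubfamily_add_card_nonMemberSubfamily a 𝒞]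
  omega

end Finset.Colex

theorem gchoose_le_card_shadow {n k : ℕ} {𝒜 : Finset (Finset (Fin n))} {x : ℝ}
    (h𝒜 : (𝒜 : Set (Finset (Fin n))).Sized (k + 1)) (hx : (k : ℝ) + 1 ≤ x)
    (hcard : gchoose x (k + 1) ≤ #𝒜) : gchoose x k ≤ #(∂ 𝒜) := by
  induction k generalizing 𝒜 x with
  | zero =>
    rw [gchoose_zero_right, Nat.one_le_cast, Nat.one_le_iff_ne_zero, ← Nat.pos_iff_ne_zero,
      card_pos]
    exact h𝒜.shadow_nonempty (nonempty_of_gchoose_le (by push_cast; linarith) hcard)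
  | succ k ihk =>
    induction hN : #𝒜 using Nat.strong_induction_on generalizing 𝒜 x with
    | _ N ihN =>
    subst hN
    push_cast at hx
    obtain ⟨s, hs⟩ := nonempty_of_gchoose_le (by push_cast; linarith) hcard
    obtain ⟨b, -⟩ : s.Nonempty := card_pos.1 (by rw [h𝒜 hs]; omega)
    have : NeZero n := NeZero.of_pos b.pos
    have h0 : IsBot (0 : Fin n) := fun c ↦ Fin.zero_le c
    obtain ⟨𝒞, h𝒞, h𝒞𝒜⟩ :=
      Colex.exists_isInitSeg_card_eq (h𝒜.card_le.trans_eq (by rw [Fintype.card_fin]))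
    set 𝒞₀ := 𝒞.memberSubfamily 0
    set 𝒞₁ := 𝒞.nonMemberSubfamily 0
    have h𝒞₁𝒞₀ : ∂ 𝒞₁ ⊆ 𝒞₀ := h𝒞.shadow_nonMemberSubfamily_subset h0
    have hsplit : (#𝒞₀ : ℝ) + #𝒞₁ = #𝒜 := by
      exact_mod_cast (card_memberSubfamily_add_card_nonMemberSubfamily 0 𝒞).trans h𝒞𝒜
    -- Otherwise the part avoiding `0` is too large for its shadow to fit inside the link.
    have hlink : gchoose (x - 1) (k + 1) ≤ #𝒞₀ := by
      by_contra! hlt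
      have h₁ : gchoose (x - 1) (k + 1 + 1) < #𝒞₁ := by
        rw [gchoose_succ_succ] at hcard
        linarith
      have h𝒞₁𝒜 : #𝒞₁ < #𝒜 := by
        refine h𝒞𝒜 ▸ h𝒞.card_nonMemberSubfamily_lt h0 ?_
        rw [← card_pos, ← Nat.cast_pos (α := ℝ)]
        exact (gchoose_nonneg (by push_cast; linarith)).trans_lt h₁
      obtain ⟨z, hz, hz₁, hxz⟩ := exists_gchoose_le_of_lt (by push_cast; linarith) h₁
      have hshadow := ihN _ h𝒞₁𝒜 h𝒞.1.nonMemberSubfamily hz hz₁ rfl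
      have h𝒞₀₁ : (#(∂ 𝒞₁) : ℝ) ≤ #𝒞₀ := by exact_mod_cast card_le_card h𝒞₁𝒞₀
      linarith
    calc gchoose x (k + 1) = gchoose (x - 1) k + gchoose (x - 1) (k + 1) := gchoose_succ_succ x k
      _ ≤ #(∂ 𝒞₀) + #𝒞₀ := add_le_add (ihk h𝒞.1.memberSubfamily (by linarith) hlink) hlink
      _ ≤ #(∂ 𝒞) := by
        exact_mod_cast (add_comm _ _).trans_le (card_memberSubfamily_add_card_shadow_le 0 𝒞)
      _ ≤ #(∂ 𝒜) := by exact_mod_cast kruskal_katona h𝒜 h𝒞𝒜.le h𝒞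

theorem stmt_12 (n d : ℕ) (𝒢 : Finset (Finset (Fin n)))
    (hunif : ∀ G ∈ 𝒢, G.card = d + 1)
    (α : ℝ) (hα : (d : ℝ) + 1 ≤ α) (hcard : (𝒢.card : ℝ) = gchoose α (d + 1)) :
    ((((Finset.univ : Finset (Fin n)).powersetCard d).filter
        (fun T => ∃ G ∈ 𝒢, T ⊆ G)).card : ℝ) ≥ gchoose α d ∧
    gchoose α d = (𝒢.card : ℝ) * ((d : ℝ) + 1) / (α - d) := by
  have h𝒢 : (𝒢 : Set (Finset (Fin n))).Sized (d + 1) := hunif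
  refine ⟨?_, ?_⟩
  · rw [← h𝒢.shadow_eq_filter]
    exact gchoose_le_card_shadow h𝒢 hα hcard.ge
  · have : α - d ≠ 0 := by linarith
    rw [hcard, gchoose_succ_right]
    field_simp
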